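/- arXiv:1502.07981 — 2 statements merged into one kernel-verified Lean document; each statement's English description precedes it below -/
import Mathlib

section
/- For all integers n and m, the relation [a⁻ⁿαaⁿ, a⁻ᵐαaᵐ] = 1 holds in G_A, i.e., the conjugates a⁻ⁿαaⁿ and a⁻ᵐαaᵐ commute as permutations of X^ℕ. -/
/-!
We formalize the automaton `A` of the paper: alphabet `X = {1,2,3}` is encoded as
`Fin 3` (letter `i+1` ↦ `i`), states `a, b, c` are encoded as `0, 1, 2 : Fin 3`.
Each state induces a permutation of the space `ℕ → Fin 3` of infinite sequences.

Note on conventions: in the paper, products of tree automorphisms compose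
left-to-right (in a word `s₁s₂⋯sₙ`, the letter `s₁` acts first); in Mathlib,
`(f * g) w = f (g w)`, i.e. the right factor acts first.  Hence a paper word
`uv` is rendered as the Lean product `v * u`; e.g. the paper's `α = ab⁻¹`
(apply `a`, then `b⁻¹`) is `b⁻¹ * a` below.
-/

namespace Lamplighter

section Generic

variable {S X : Type*}

/-- The state of the automaton after reading the first `n` letters of `w`, starting at `s`. -/
def run (nxt : S → X → S) (s : S) (w : ℕ → X) : ℕ → S
  | 0 => s
  | n + 1 => nxt (run nxt s w n) (w n)

/-- The output sequence of the automaton started in state `s` reading `w`. -/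
def fwd (nxt : S → X → S) (out : S → Equiv.Perm X) (s : S) (w : ℕ → X) : ℕ → X :=
  fun n => out (run nxt s w n) (w n)

/-- Transition function of the inverse automaton. -/
def invNxt (nxt : S → X → S) (out : S → Equiv.Perm X) (s : S) (y : X) : S :=
  nxt s ((out s).symm y)

/-- The action of the inverse automaton, started at state `s`. -/
def bwd (nxt : S → X → S) (out : S → Equiv.Perm X) (s : S) (y : ℕ → X) : ℕ → X :=
  fun n => (out (run (invNxt nxt out) s y n)).symm (y n)

theorem run_inv_fwd (nxt : S → X → S) (out : S → Equiv.Perm X) (s : S) (w : ℕ → X) :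
    ∀ n, run (invNxt nxt out) s (fwd nxt out s w) n = run nxt s w n := by
  intro n
  induction n with
  | zero => rfl
  | succ n ih => simp [run, ih, invNxt, fwd]

theorem run_bwd (nxt : S → X → S) (out : S → Equiv.Perm X) (s : S) (y : ℕ → X) :
    ∀ n, run nxt s (bwd nxt out s y) n = run (invNxt nxt out) s y n := by
  intro n
  induction n with
  | zero => rfl
  | succ n ih => simp [run, ih, bwd, invNxt]

/-- The permutation of the space of infinite sequences induced by state `s`
of an invertible automaton. -/
def statePerm (nxt : S → X → S) (out : S → Equiv.Perm X) (s : S) : Equiv.Perm (ℕ → X) where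
  toFun := fwd nxt out s
  invFun := bwd nxt out s
  left_inv := fun w => funext fun n => by simp [bwd, run_inv_fwd, fwd]
  right_inv := fun y => funext fun n => by simp [fwd, run_bwd, bwd]

end Generic

/-- The alphabet `X = {1,2,3}`, encoded as `Fin 3`. -/
abbrev X3 := Fin 3

/-- Transition function of the automaton `A` (states `a = 0`, `b = 1`, `c = 2`):
from `a`: `1 ↦ a, 2 ↦ b, 3 ↦ c`; from `b`: `1 ↦ c, 2 ↦ a, 3 ↦ b`;
from `c`: `1 ↦ b, 2 ↦ c, 3 ↦ a`. -/
def nxtA : Fin 3 → X3 → Fin 3 := ![![0, 1, 2], ![2, 0, 1], ![1, 2, 0]]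

/-- Output permutations of the automaton `A`: state `a` acts on letters as the
transposition `(2 3)`, state `b` as `(1 3)`, state `c` as `(1 2)`. -/
def outA : Fin 3 → Equiv.Perm X3 := ![Equiv.swap 1 2, Equiv.swap 0 2, Equiv.swap 0 1]

/-- The permutation of `X^ℕ` given by state `a`. -/
def a : Equiv.Perm (ℕ → X3) := statePerm nxtA outA 0

/-- The permutation of `X^ℕ` given by state `b`. -/
def b : Equiv.Perm (ℕ → X3) := statePerm nxtA outA 1

/-- The permutation of `X^ℕ` given by state `c`. -/
def c : Equiv.Perm (ℕ → X3) := statePerm nxtA outA 2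

/-- The group `G_A` generated by the automaton `A`. -/
def GA : Subgroup (Equiv.Perm (ℕ → X3)) := Subgroup.closure {a, b, c}

/-- The element `α = ab⁻¹` of the paper (first apply `a`, then `b⁻¹`). -/
def α : Equiv.Perm (ℕ → X3) := b⁻¹ * a

/-- The set `W` of permutations acting coordinatewise by a sequence of even
permutations of the alphabet. -/
def W : Set (Equiv.Perm (ℕ → X3)) :=
  {g | ∃ π : ℕ → Equiv.Perm X3, (∀ n, Equiv.Perm.sign (π n) = 1) ∧
    ∀ (w : ℕ → X3) (n : ℕ), g w n = π n (w n)}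

/-- The subgroup `N` generated by the conjugates `a⁻ⁿ α aⁿ`, `n ∈ ℤ`
(in Lean's composition order: `aⁿ * α * a⁻ⁿ`). -/
def N : Subgroup (Equiv.Perm (ℕ → X3)) :=
  Subgroup.closure {g | ∃ n : ℤ, g = a ^ n * α * a ^ (-n)}

end Lamplighter

/-!
Read the alphabet as `ZMod 3`: in state `s` the automaton `A` outputs `-x - s` on letter `x` and
moves to state `x - s`. Started in `a = 0`, the state sequence depends additively on the input, so
`a` is an additive automorphism of `(ZMod 3)^ℕ`; and `b (w + 2) = a w`, so `α` is the translation by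
the constant sequence `2`. Conjugating a translation by the additive map `aⁿ` gives the translation
by `aⁿ 2`, and translations commute.
-/

namespace Equiv.Perm

def addAutSubgroup (A : Type*) [AddGroup A] : Subgroup (Perm A) where
  carrier := {g | ∀ x y, g (x + y) = g x + g y}
  mul_mem' {g h} hg hh x y := by rw [mul_apply, hh, hg, mul_apply, mul_apply]
  one_mem' _ _ := rfl
  inv_mem' {g} hg := map_add (AddEquiv.mk' g hg).symm

theorem conj_addRight_of_mem_addAutSubgroup {A : Type*} [AddGroup A] {g : Perm A}
    (hg : g ∈ addAutSubgroup A) (k : A) : g * Equiv.addRight k * g⁻¹ = Equiv.addRight (g k) := by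
  ext x
  simp [hg _ _]

end Equiv.Perm

theorem Equiv.commute_addRight {A : Type*} [AddCommGroup A] (k l : A) :
    Commute (Equiv.addRight k) (Equiv.addRight l) := by
  rw [Commute, SemiconjBy, ← Equiv.addRight_add, ← Equiv.addRight_add, add_comm]

namespace Lamplighter

open Equiv.Perm
open scoped commutatorElement

theorem nxtA_apply (s x : X3) : nxtA s x = x - s := by revert s x; decide

theorem outA_apply (s x : X3) : outA s x = -x - s := by revert s x; decide

theorem run_nxtA_zero_add (w k : ℕ → X3) (n : ℕ) :
    run nxtA 0 (w + k) n = run nxtA 0 w n + run nxtA 0 k n := by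
  induction n with
  | zero => simp [run]
  | succ n ih => simp only [run, ih, nxtA_apply, Pi.add_apply]; abel

theorem a_mem_addAutSubgroup : a ∈ addAutSubgroup (ℕ → X3) := fun w k => funext fun n => by
  change fwd nxtA outA 0 (w + k) n = fwd nxtA outA 0 w n + fwd nxtA outA 0 k n
  simp only [fwd, run_nxtA_zero_add, outA_apply, Pi.add_apply]
  abel

theorem run_nxtA_one_add_two (w : ℕ → X3) (n : ℕ) :
    run nxtA 1 (w + 2) n = run nxtA 0 w n + 1 := by
  induction n with
  | zero => rfl
  | succ n ih =>
    simp only [run, ih, nxtA_apply, Pi.add_apply, Pi.ofNat_apply]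
    grind

theorem b_add_two (w : ℕ → X3) : b (w + 2) = a w := funext fun n => by
  change fwd nxtA outA 1 (w + 2) n = fwd nxtA outA 0 w n
  simp only [fwd, run_nxtA_one_add_two, outA_apply, Pi.add_apply, Pi.ofNat_apply]
  grind

theorem α_eq_addRight : α = Equiv.addRight 2 := by
  rw [α, inv_mul_eq_iff_eq_mul]
  ext w : 1
  exact (b_add_two w).symm

/-- For all integers `n, m`, the conjugates `a⁻ⁿαaⁿ` and `a⁻ᵐαaᵐ`
commute: `[a⁻ⁿαaⁿ, a⁻ᵐαaᵐ] = 1`.  (The paper's conjugate `a⁻ⁿαaⁿ`, with words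
composing left-to-right, is `a ^ n * α * a ^ (-n)` in Lean.) -/
theorem conjugates_commute :
    ∀ n m : ℤ, ⁅a ^ n * α * a ^ (-n), a ^ m * α * a ^ (-m)⁆ = 1 := by
  have conj_α : ∀ n : ℤ, a ^ n * α * a ^ (-n) = Equiv.addRight ((a ^ n) 2) := fun n => by
    rw [α_eq_addRight, zpow_neg,
      conj_addRight_of_mem_addAutSubgroup (zpow_mem a_mem_addAutSubgroup n)]
  intro n m
  rw [conj_α, conj_α, commutatorElement_eq_one_iff_commute]
  exact Equiv.commute_addRight _ _

end Lamplighter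
end

section
/- Let N be the subgroup of G_A generated by {a⁻ⁿαaⁿ : n ∈ ℤ}. Then N is isomorphic to the direct sum ⨁_{i∈ℤ} ℤ/3ℤ; concretely, for any integers n₁ < n₂ < … < n_k (k ≥ 1) and any ε₁, …, ε_k ∈ {1, −1}, the product (a^{−n₁}α^{ε₁}a^{n₁})(a^{−n₂}α^{ε₂}a^{n₂})⋯(a^{−n_k}α^{ε_k}a^{n_k}) is not the identity permutation of X^ℕ. -/
open scoped PowerSeries in
open Polynomial in
theorem PowerSeries.transcendental_of_constantCoeff_eq_zero {R : Type*} [CommRing R] [IsDomain R]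
    {s : R⟦X⟧} (hs : PowerSeries.constantCoeff s = 0) (hs0 : s ≠ 0) : Transcendental R s := by
  rintro ⟨p, hp0, hps⟩
  obtain ⟨q, hpq, hq⟩ := p.exists_eq_pow_rootMultiplicity_mul_and_not_dvd hp0 0
  rw [map_zero, sub_zero, Polynomial.X_dvd_iff] at hq
  rw [hpq, map_zero, sub_zero, map_mul, map_pow, aeval_X, mul_eq_zero] at hps
  refine hps.elim (pow_ne_zero _ hs0) fun hqs => hq ?_
  have := congrArg PowerSeries.constantCoeff hqs
  rwa [aeval_def, hom_eval₂, hs, eval₂_at_zero, map_zero, RingHom.comp_apply,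
    PowerSeries.algebraMap_apply, Algebra.algebraMap_self_apply, PowerSeries.constantCoeff_C]
    at this

open Polynomial in
theorem Transcendental.linearIndependent_zpow {K A : Type*} [CommRing K] [Ring A] [Algebra K A]
    {u : Aˣ} (hu : Transcendental K (u : A)) :
    LinearIndependent K fun m : ℤ => ((u ^ m : Aˣ) : A) := by
  refine linearIndependent_iff'.2 fun s g hg i hi => ?_
  obtain ⟨b, hb⟩ := s.bddBelow
  set N : ℕ := (-b).toNat
  have hN : ∀ j ∈ s, ((j + N).toNat : ℤ) = j + N := fun j hj => by
    have := hb hj; omega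
  set p : K[X] := ∑ j ∈ s, monomial (j + N).toNat (g j)
  have hp : Polynomial.aeval (u : A) p = 0 := by
    have : Polynomial.aeval (u : A) p =
        ((u ^ (N : ℤ) : Aˣ) : A) * ∑ j ∈ s, g j • ((u ^ j : Aˣ) : A) := by
      rw [map_sum, Finset.mul_sum]
      refine Finset.sum_congr rfl fun j hj => ?_
      rw [aeval_monomial, ← Algebra.smul_def, mul_smul_comm, ← Units.val_mul, ← zpow_add,
        add_comm (N : ℤ), ← hN j hj, zpow_natCast, Units.val_pow_eq_pow_val, Int.toNat_natCast]
    rw [this, hg, mul_zero]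
  have hp0 : p = 0 := by
    by_contra h
    exact hu ⟨p, h, hp⟩
  have hcoeff : p.coeff (i + N).toNat = g i := by
    simp only [p, finsetSum_coeff, coeff_monomial]
    refine (Finset.sum_eq_single_of_mem i hi fun j hj hji => if_neg fun h => hji ?_).trans
      (if_pos rfl)
    have := hN j hj; have := hN i hi; omega
  rw [← hcoeff, hp0, coeff_zero]

open scoped PowerSeries in
theorem PowerSeries.isUnit_one_add_X {R : Type*} [Ring R] : IsUnit (1 + X : R⟦X⟧) :=
  isUnit_iff_constantCoeff.2 (by simp)

open scoped PowerSeries in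
theorem PowerSeries.isUnit_X_sub_one {R : Type*} [Ring R] : IsUnit (X - 1 : R⟦X⟧) :=
  isUnit_iff_constantCoeff.2 (by simp)

theorem MulAction.toPermHom_units_mul_ofAdd_mul_inv {R : Type*} [Ring R] (v : Rˣ) (c : R) :
    toPermHom Rˣ R v * toPermHom (Multiplicative R) R (.ofAdd c) * (toPermHom Rˣ R v)⁻¹ =
      toPermHom (Multiplicative R) R (.ofAdd (v * c)) := by
  ext x
  simp [Units.smul_def, add_comm]

namespace Lamplighter

open PowerSeries

open Fin.CommRing in
theorem nxtA_eq_sub (s x : Fin 3) : nxtA s x = x - s := by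
  revert s x; decide

open Fin.CommRing in
theorem outA_eq_neg_sub (s x : Fin 3) : outA s x = -x - s := by
  revert s x; decide

noncomputable def toSeries : (ℕ → X3) ≃+ (ZMod 3)⟦X⟧ where
  toFun w := mk fun n => ZMod.finEquiv 3 (w n)
  invFun f n := (ZMod.finEquiv 3).symm (coeff n f)
  left_inv w := by simp
  right_inv f := by ext; simp
  map_add' w u := by ext; simp

theorem coeff_toSeries (w : ℕ → X3) (n : ℕ) : coeff n (toSeries w) = ZMod.finEquiv 3 (w n) :=
  coeff_mk _ _

theorem three_eq_zero : (3 : (ZMod 3)⟦X⟧) = 0 := by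
  rw [← map_ofNat (C (R := ZMod 3)) 3]
  exact map_eq_zero_iff _ C_injective |>.mpr rfl

theorem one_add_X_mul_run (s : Fin 3) (w : ℕ → X3) :
    (1 + X) * toSeries (run nxtA s w) = X * toSeries w + C (ZMod.finEquiv 3 s) := by
  ext (_ | n)
  · simp only [add_mul, one_mul, map_add, coeff_zero_X_mul, coeff_toSeries, coeff_zero_C, add_zero,
      zero_add, run]
  · simp [add_mul, coeff_toSeries, run, coeff_succ_X_mul, nxtA_eq_sub]

theorem toSeries_statePerm (s : Fin 3) (w : ℕ → X3) :
    toSeries (statePerm nxtA outA s w) = -toSeries w - toSeries (run nxtA s w) := by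
  ext n
  simp [coeff_toSeries, statePerm, fwd, outA_eq_neg_sub]

theorem one_add_X_mul_toSeries_statePerm (s : Fin 3) (w : ℕ → X3) :
    (1 + X) * toSeries (statePerm nxtA outA s w) =
      (X - 1) * toSeries w - C (ZMod.finEquiv 3 s) := by
  rw [toSeries_statePerm, mul_sub, mul_neg, one_add_X_mul_run]
  linear_combination (-X * toSeries w) * three_eq_zero

noncomputable def aMultiplier : (ZMod 3)⟦X⟧ˣ := isUnit_X_sub_one.unit * isUnit_one_add_X.unit⁻¹

noncomputable def αTranslation : (ZMod 3)⟦X⟧ := ↑(isUnit_X_sub_one (R := ZMod 3)).unit⁻¹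

theorem one_add_X_mul_aMultiplier : (1 + X) * (aMultiplier : (ZMod 3)⟦X⟧) = X - 1 := by
  rw [aMultiplier, Units.val_mul, mul_comm, mul_assoc, IsUnit.val_inv_mul, mul_one,
    IsUnit.unit_spec]

theorem X_sub_one_mul_αTranslation : (X - 1) * αTranslation = 1 :=
  IsUnit.mul_val_inv _

theorem toSeries_a (w : ℕ → X3) : toSeries (a w) = aMultiplier * toSeries w := by
  rw [← isUnit_one_add_X.unit.mul_right_inj, IsUnit.unit_spec, ← mul_assoc,
    one_add_X_mul_aMultiplier, a, one_add_X_mul_toSeries_statePerm, map_zero, map_zero, sub_zero]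

theorem toSeries_α (w : ℕ → X3) : toSeries (α w) = toSeries w + αTranslation := by
  rw [← toSeries.apply_symm_apply (toSeries w + αTranslation)]
  congr 1
  rw [α, Equiv.Perm.mul_apply, Equiv.Perm.inv_eq_iff_eq]
  apply toSeries.injective
  rw [← isUnit_one_add_X.unit.mul_right_inj, IsUnit.unit_spec, b, one_add_X_mul_toSeries_statePerm,
    toSeries.apply_symm_apply, toSeries_a, ← mul_assoc, one_add_X_mul_aMultiplier, mul_add,
    X_sub_one_mul_αTranslation, map_one, map_one, add_sub_cancel_right]

theorem transcendental_aMultiplier : Transcendental (ZMod 3) (aMultiplier : (ZMod 3)⟦X⟧) := by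
  set u : (ZMod 3)⟦X⟧ := ↑aMultiplier
  have hu : (1 + X) * (u + 1) = -X := by
    linear_combination one_add_X_mul_aMultiplier + X * three_eq_zero
  have hc : constantCoeff (u + 1) = 0 := by simpa using congrArg constantCoeff hu
  have hne : u + 1 ≠ 0 := right_ne_zero_of_mul (hu ▸ neg_ne_zero.2 X_ne_zero)
  have := (transcendental_of_constantCoeff_eq_zero hc hne).aeval (Polynomial.X - Polynomial.C 1)
    (by rw [Polynomial.natDegree_X_sub_C]; exact one_ne_zero)
    (by rw [Polynomial.leadingCoeff_X_sub_C]; exact one_mem _)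
  rwa [map_sub, Polynomial.aeval_X, Polynomial.aeval_C, map_one, add_sub_cancel_right] at this

open MulAction Multiplicative

theorem permCongrHom_a : toSeries.toEquiv.permCongrHom a = toPermHom _ _ aMultiplier := by
  ext f
  simp [Equiv.permCongr_apply, toSeries_a, Units.smul_def]

theorem permCongrHom_α :
    toSeries.toEquiv.permCongrHom α = toPermHom (Multiplicative _) _ (ofAdd αTranslation) := by
  ext f
  simp [Equiv.permCongr_apply, toSeries_α, add_comm]

noncomputable def conjTranslation (m : ℤ) : (ZMod 3)⟦X⟧ := ↑(aMultiplier ^ m) * αTranslation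

theorem permCongrHom_conj (m t : ℤ) :
    toSeries.toEquiv.permCongrHom (a ^ m * α ^ t * a ^ (-m)) =
      toPermHom (Multiplicative _) _ (ofAdd (t • conjTranslation m)) := by
  rw [map_mul, map_mul, map_zpow, map_zpow, map_zpow, permCongrHom_a, permCongrHom_α, zpow_neg,
    ← map_zpow (toPermHom (ZMod 3)⟦X⟧ˣ _), ← map_zpow (toPermHom (Multiplicative _) _),
    ← ofAdd_zsmul, toPermHom_units_mul_ofAdd_mul_inv, conjTranslation, mul_smul_comm]

theorem linearIndependent_conjTranslation : LinearIndependent (ZMod 3) conjTranslation :=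
  transcendental_aMultiplier.linearIndependent_zpow.map' (LinearMap.mulRight (ZMod 3) αTranslation)
    (LinearMap.ker_eq_bot.2 (Units.isUnit _).mul_left_injective)

noncomputable def ofFinsupp : Multiplicative (ℤ →₀ ZMod 3) →* Equiv.Perm (ℕ → X3) :=
  toSeries.toEquiv.permCongrHom.symm.toMonoidHom.comp <| (toPermHom (Multiplicative _) _).comp
    (Finsupp.linearCombination (ZMod 3) conjTranslation).toAddMonoidHom.toMultiplicative

theorem ofFinsupp_single (m t : ℤ) :
    ofFinsupp (ofAdd (Finsupp.single m (t : ZMod 3))) = a ^ m * α ^ t * a ^ (-m) := by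
  rw [ofFinsupp, MonoidHom.comp_apply, MonoidHom.comp_apply, MulEquiv.coe_toMonoidHom,
    MulEquiv.symm_apply_eq, permCongrHom_conj]
  simp [Int.cast_smul_eq_zsmul]

theorem ofFinsupp_injective : Function.Injective ofFinsupp := by
  have htrans : Function.Injective (toPermHom (Multiplicative (ZMod 3)⟦X⟧) (ZMod 3)⟦X⟧) :=
    fun c c' h => toAdd.injective <| by
      simpa only [toPermHom_apply, toPerm_apply, ← toAdd_vadd, vadd_eq_add, add_zero]
        using Equiv.congr_fun h 0
  simp only [ofFinsupp, MonoidHom.coe_comp]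
  exact (MulEquiv.injective _).comp (htrans.comp linearIndependent_conjTranslation)

theorem range_ofFinsupp : ofFinsupp.range = N := by
  apply le_antisymm
  · rintro _ ⟨f, rfl⟩
    obtain ⟨f, rfl⟩ := ofAdd.surjective f
    induction f using Finsupp.induction_linear with
    | zero => simp
    | add f g hf hg => simpa only [ofAdd_add, map_mul] using N.mul_mem hf hg
    | single m r =>
      rw [← ZMod.intCast_zmod_cast r, ofFinsupp_single, zpow_neg, ← conj_zpow]
      exact N.zpow_mem (Subgroup.subset_closure ⟨m, by rw [zpow_neg]⟩) _
  · rw [N, Subgroup.closure_le]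
    rintro _ ⟨m, rfl⟩
    exact ⟨ofAdd (Finsupp.single m 1), by simpa using ofFinsupp_single m 1⟩

/-- The subgroup `N` generated by `{a⁻ⁿαaⁿ : n ∈ ℤ}` is
isomorphic to `⨁_{i ∈ ℤ} ℤ/3ℤ` (as the multiplicative version of `ℤ →₀ ZMod 3`);
concretely, for any integers `n₁ < … < n_k` and signs `ε₁, …, ε_k ∈ {1, -1}`, the
product `(a^{-n₁}α^{ε₁}a^{n₁})⋯(a^{-n_k}α^{ε_k}a^{n_k})` (taken left-to-right,
hence the reversed Lean product) is not the identity. -/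
theorem N_iso_directSum :
    Nonempty (N ≃* Multiplicative (ℤ →₀ ZMod 3)) ∧
    ∀ (k : ℕ) (n : Fin (k + 1) → ℤ), StrictMono n →
      ∀ ε : Fin (k + 1) → ℤ, (∀ i, ε i = 1 ∨ ε i = -1) →
        ((List.ofFn fun i => a ^ (n i) * α ^ (ε i) * a ^ (-(n i))).reverse).prod ≠ 1 := by
  refine ⟨⟨((MonoidHom.ofInjective ofFinsupp_injective).trans
    (MulEquiv.subgroupCongr range_ofFinsupp)).symm⟩, fun k n hn ε hε hprod => ?_⟩
  have hprod' : ofFinsupp (∏ i, ofAdd (Finsupp.single (n i) (ε i : ZMod 3))) = ofFinsupp 1 := by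
    rw [map_one, ← hprod, ← List.prod_ofFn, ← List.prod_reverse, map_list_prod, List.map_reverse,
      List.map_ofFn]
    simp only [Function.comp_def, ofFinsupp_single]
  have hε0 : (ε 0 : ZMod 3) = 0 := by
    simpa [← ofAdd_sum, Finsupp.finsetSum_apply, Finsupp.single_apply, hn.injective.eq_iff] using
      congrArg (fun f : Multiplicative (ℤ →₀ ZMod 3) => f.toAdd (n 0)) (ofFinsupp_injective hprod')
  rcases hε 0 with h | h <;> rw [h] at hε0 <;> exact absurd hε0 (by decide)

end Lamplighter
end
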